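/- Let P be the simplex in ℝ³ with vertices (0,0,0), (1,3,0), (0,2,3), (4,1,3). Then P contains exactly the four interior lattice points (1,2,1), (1,2,2), (1,1,1), (2,1,2), and no two lattice points of P determine parallel segments nor a segment of lattice length ≥ 2; consequently the Minkowski length of P is 1 while P has 4 interior lattice points. -/

import Mathlib

/-!
The simplex `P18` is cut out by its four facet inequalities. These bound the coordinates of its
lattice points, leaving eight of them, four of which are interior. For these eight points, a finite
check shows that the differences of distinct points are primitive and pairwise distinct. Since
the differences are primitive, two parallel segments have equal or opposite difference vectors,
so they coincide. A Minkowski sum of two primitive segments `u, v` would put a lattice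
parallelogram `A, A + u, A + v, A + u + v` in `P18`, whose opposite sides have the same
difference vector; hence `L(P18) = 1`.
-/

open Pointwise

/-- The real point corresponding to a lattice point. -/
def coeV {n : ℕ} (v : Fin n → ℤ) : Fin n → ℝ := fun i => (v i : ℝ)

/-- A vector in `ℤ^n` is primitive if the gcd of its coordinates is `1`. -/
def IsPrim {n : ℕ} (v : Fin n → ℤ) : Prop := Finset.univ.gcd v = 1

/-- The zonotope with base lattice point `A` obtained as the Minkowski sum of the
lattice segments `[0, v i]`. -/
def Zono {n L : ℕ} (A : Fin n → ℤ) (v : Fin L → Fin n → ℤ) : Set (Fin n → ℝ) :=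
  ({coeV A} : Set (Fin n → ℝ)) + ∑ i, segment ℝ 0 (coeV (v i))

/-- `P` contains (a translate of) a Minkowski sum of `L` primitive lattice segments. -/
def IsDecomp {n : ℕ} (P : Set (Fin n → ℝ)) (L : ℕ) : Prop :=
  ∃ (A : Fin n → ℤ) (v : Fin L → Fin n → ℤ), (∀ i, IsPrim (v i)) ∧ Zono A v ⊆ P

/-- `L` is the Minkowski length of `P`. -/
def MinkLen {n : ℕ} (P : Set (Fin n → ℝ)) (L : ℕ) : Prop :=
  IsDecomp P L ∧ ∀ M, IsDecomp P M → M ≤ L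

/-- `P` is a lattice polytope: the convex hull of a nonempty finite set of lattice points. -/
def IsLatticePolytope {n : ℕ} (P : Set (Fin n → ℝ)) : Prop :=
  ∃ S : Finset (Fin n → ℤ), S.Nonempty ∧ P = convexHull ℝ (coeV '' ↑S)

/-- `Zono A v` is a smallest maximal Minkowski decomposition in `P`: it realizes the
Minkowski length of `P` and is minimal with respect to inclusion among all maximal
decompositions in `P`. -/
def IsSmallestMax {n L : ℕ} (P : Set (Fin n → ℝ)) (A : Fin n → ℤ)
    (v : Fin L → Fin n → ℤ) : Prop :=
  (∀ i, IsPrim (v i)) ∧ Zono A v ⊆ P ∧ MinkLen P L ∧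
    ∀ (B : Fin n → ℤ) (w : Fin L → Fin n → ℤ), (∀ i, IsPrim (w i)) →
      Zono B w ⊆ P → Zono B w ⊆ Zono A v → Zono B w = Zono A v

/-- The simplex with vertices `(0,0,0), (1,3,0), (0,2,3), (4,1,3)`. -/
def P18 : Set (Fin 3 → ℝ) :=
  convexHull ℝ {coeV ![0, 0, 0], coeV ![1, 3, 0], coeV ![0, 2, 3], coeV ![4, 1, 3]}

theorem coeV_add {n : ℕ} (a b : Fin n → ℤ) : coeV (a + b) = coeV a + coeV b := by
  funext i; simp [coeV]

theorem coeV_sum {n : ℕ} {ι : Type*} (s : Finset ι) (f : ι → Fin n → ℤ) :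
    coeV (∑ i ∈ s, f i) = ∑ i ∈ s, coeV (f i) := by
  funext j; simp [coeV, Finset.sum_apply]

theorem IsPrim.ne_zero {n : ℕ} {v : Fin n → ℤ} (hv : IsPrim v) : v ≠ 0 := by
  rintro rfl
  exact zero_ne_one ((Finset.gcd_eq_zero_iff.2 fun _ _ => rfl).symm.trans hv)

theorem IsPrim.eq_or_eq_neg_of_mul_eq {n : ℕ} {u v : Fin n → ℤ} (hu : IsPrim u) (hv : IsPrim v)
    {p q : ℤ} (hp : p ≠ 0) (h : ∀ i, p * u i = q * v i) : u = v ∨ u = -v := by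
  have hqp : q ∣ p := by
    have : q ∣ Finset.univ.gcd fun i => p * u i :=
      Finset.dvd_gcd fun i _ => h i ▸ dvd_mul_right q (v i)
    rwa [Finset.gcd_mul_left, (hu : Finset.univ.gcd u = 1), mul_one, dvd_normalize_iff] at this
  have hpq : p ∣ q := by
    have : p ∣ Finset.univ.gcd fun i => q * v i :=
      Finset.dvd_gcd fun i _ => h i ▸ dvd_mul_right p (u i)
    rwa [Finset.gcd_mul_left, (hv : Finset.univ.gcd v = 1), mul_one, dvd_normalize_iff] at this
  rcases Int.associated_iff.1 (associated_of_dvd_dvd hpq hqp) with rfl | rfl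
  · exact Or.inl (funext fun i => mul_left_cancel₀ hp (h i))
  · refine Or.inr (funext fun i => mul_left_cancel₀ hp ?_)
    rw [h i, Pi.neg_apply]
    ring

theorem coeV_add_sum_mem_zono {n L : ℕ} (A : Fin n → ℤ) (v : Fin L → Fin n → ℤ)
    (s : Finset (Fin L)) : coeV (A + ∑ i ∈ s, v i) ∈ Zono A v := by
  rw [Zono, coeV_add, coeV_sum, ← Finset.univ_inter s, ← Finset.sum_ite_mem]
  refine Set.add_mem_add rfl ((Set.mem_fintype_sum _ _).2 ⟨_, fun i => ?_, rfl⟩)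
  split_ifs
  exacts [right_mem_segment ℝ _ _, left_mem_segment ℝ _ _]

theorem isDecomp_one_of_isPrim_sub {n : ℕ} {P : Set (Fin n → ℝ)} (hP : Convex ℝ P)
    {x y : Fin n → ℤ} (hx : coeV x ∈ P) (hy : coeV y ∈ P) (hxy : IsPrim (y - x)) :
    IsDecomp P 1 := by
  refine ⟨x, fun _ => y - x, fun _ => hxy, ?_⟩
  rw [Zono, Fin.sum_univ_one, Set.singleton_add, segment_translate_image, add_zero, ← coeV_add,
    add_sub_cancel]
  exact hP.segment_subset hx hy

theorem IsDecomp.le_one_of_injOn_sub {n M : ℕ} {P : Set (Fin n → ℝ)}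
    (hP : Set.InjOn (fun p => p.2 - p.1) {x : Fin n → ℤ | coeV x ∈ P}.offDiag)
    (h : IsDecomp P M) : M ≤ 1 := by
  obtain ⟨A, v, hprim, hsub⟩ := h
  by_contra! hM
  let i : Fin M := ⟨0, by omega⟩
  let j : Fin M := ⟨1, hM⟩
  have hij : i ≠ j := by simp [i, j, Fin.ext_iff]
  have hmem (s : Finset (Fin M)) : coeV (A + ∑ k ∈ s, v k) ∈ P :=
    hsub (coeV_add_sum_mem_zono A v s)
  have h0 := hmem ∅
  have hi := hmem {i}
  have hj := hmem {j}
  have hij' := hmem {i, j}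
  simp only [Finset.sum_empty, add_zero, Finset.sum_singleton, Finset.sum_pair hij] at h0 hi hj hij'
  have hvj : v j ≠ 0 := (hprim j).ne_zero
  have := @hP (A, A + v j) ⟨h0, hj, by simpa using hvj⟩ (A + v i, A + (v i + v j))
    ⟨hi, hij', by simpa using hvj⟩ (by simp only; abel)
  simp only [Prod.mk.injEq, left_eq_add] at this
  exact (hprim i).ne_zero this.1

theorem ContinuousLinearMap.interior_preimage_of_ne_zero {M : Type*} [AddCommGroup M]
    [TopologicalSpace M] [ContinuousAdd M] [Module ℝ M] [ContinuousSMul ℝ M] (f : StrongDual ℝ M)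
    (hf : f ≠ 0) (s : Set ℝ) : interior (f ⁻¹' s) = f ⁻¹' interior s :=
  ((f.isOpenMap_of_ne_zero hf).preimage_interior_eq_interior_preimage f.continuous s).symm

def linForm3 (a b c : ℝ) : StrongDual ℝ (Fin 3 → ℝ) :=
  a • ContinuousLinearMap.proj 0 + b • ContinuousLinearMap.proj 1 + c • ContinuousLinearMap.proj 2

@[simp]
theorem linForm3_apply (a b c : ℝ) (x : Fin 3 → ℝ) :
    linForm3 a b c x = a * x 0 + b * x 1 + c * x 2 := rfl

theorem linForm3_ne_zero {a b c : ℝ} (ha : a ≠ 0) : linForm3 a b c ≠ 0 :=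
  DFunLike.ne_iff.2 ⟨Pi.single 0 1, by simpa using ha⟩

theorem P18_eq_inter :
    P18 = linForm3 (-9) 3 (-2) ⁻¹' Set.Iic 0 ∩ linForm3 9 (-3) (-11) ⁻¹' Set.Iic 0 ∩
      linForm3 (-3) (-12) 8 ⁻¹' Set.Iic 0 ∩ linForm3 3 12 5 ⁻¹' Set.Iic 39 := by
  apply subset_antisymm
  · refine convexHull_min ?_ ?_
    · rintro _ (rfl | rfl | rfl | rfl) <;> norm_num [coeV, Matrix.cons_val_two, Matrix.tail_cons]
    · exact (((convex_Iic _).linear_preimage _).inter ((convex_Iic _).linear_preimage _)).inter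
        ((convex_Iic _).linear_preimage _) |>.inter ((convex_Iic _).linear_preimage _)
  · rintro x ⟨⟨⟨h₁, h₂⟩, h₃⟩, h₄⟩
    simp only [Set.mem_preimage, Set.mem_Iic, linForm3_apply] at h₁ h₂ h₃ h₄
    -- barycentric coordinates with respect to the four vertices, read off the facet forms
    let w : Fin 4 → ℝ := ![(39 - (3 * x 0 + 12 * x 1 + 5 * x 2)) / 39,
      -(-3 * x 0 + -12 * x 1 + 8 * x 2) / 39, -(9 * x 0 + -3 * x 1 + -11 * x 2) / 39,
      -(-9 * x 0 + 3 * x 1 + -2 * x 2) / 39]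
    let z : Fin 4 → Fin 3 → ℝ :=
      ![coeV ![0, 0, 0], coeV ![1, 3, 0], coeV ![0, 2, 3], coeV ![4, 1, 3]]
    have hx : ∑ k, w k • z k = x := by
      ext i; fin_cases i <;> simp [w, z, Fin.sum_univ_four, coeV] <;> ring
    rw [← hx]
    refine (convex_convexHull ℝ _).sum_mem (fun k _ => ?_) ?_ (fun k _ => subset_convexHull ℝ _ ?_)
    · fin_cases k <;> simp [w] <;> linarith
    · simp [w, Fin.sum_univ_four]; ring
    · fin_cases k <;> simp [z]

theorem interior_P18 :
    interior P18 = linForm3 (-9) 3 (-2) ⁻¹' Set.Iio 0 ∩ linForm3 9 (-3) (-11) ⁻¹' Set.Iio 0 ∩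
      linForm3 (-3) (-12) 8 ⁻¹' Set.Iio 0 ∩ linForm3 3 12 5 ⁻¹' Set.Iio 39 := by
  simp (disch := norm_num) only [P18_eq_inter, interior_inter, interior_Iic,
    ContinuousLinearMap.interior_preimage_of_ne_zero _ (linForm3_ne_zero _)]

def latticePointsP18 : Finset (Fin 3 → ℤ) :=
  {![0, 0, 0], ![0, 2, 3], ![1, 1, 1], ![1, 2, 1], ![1, 2, 2], ![1, 3, 0], ![2, 1, 2], ![4, 1, 3]}

theorem mem_latticePointsP18 {x : Fin 3 → ℤ} (hx : coeV x ∈ P18) : x ∈ latticePointsP18 := by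
  obtain ⟨a, b, c, rfl⟩ : ∃ a b c : ℤ, x = ![a, b, c] :=
    ⟨x 0, x 1, x 2, by ext i; fin_cases i <;> rfl⟩
  simp only [P18_eq_inter, Set.mem_inter_iff, Set.mem_preimage, Set.mem_Iic, linForm3_apply,
    coeV, Matrix.cons_val_zero, Matrix.cons_val_one, Matrix.cons_val_two, Matrix.tail_cons,
    Matrix.head_cons] at hx
  obtain ⟨⟨⟨h₁, h₂⟩, h₃⟩, h₄⟩ := hx
  norm_cast at h₁ h₂ h₃ h₄
  have : 0 ≤ a := by omega
  have : a ≤ 4 := by omega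
  have : -1 ≤ b := by omega
  have : b ≤ 3 := by omega
  have : 0 ≤ c := by omega
  have : c ≤ 3 := by omega
  interval_cases a <;> interval_cases b <;> interval_cases c <;> first | omega | decide

theorem isPrim_sub_of_mem_latticePointsP18 :
    ∀ x ∈ latticePointsP18, ∀ y ∈ latticePointsP18, x ≠ y → IsPrim (y - x) := by
  unfold IsPrim; decide

theorem injOn_sub_offDiag_latticePointsP18 :
    Set.InjOn (fun p => p.2 - p.1) (latticePointsP18.offDiag : Set ((Fin 3 → ℤ) × (Fin 3 → ℤ))) :=
  Finset.card_image_iff.1 (by decide)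

theorem interior_latticePoints_P18 : {x : Fin 3 → ℤ | coeV x ∈ interior P18} =
    {![1, 2, 1], ![1, 2, 2], ![1, 1, 1], ![2, 1, 2]} := by
  ext x
  constructor
  · intro hx
    have hP := mem_latticePointsP18 (interior_subset hx)
    simp only [latticePointsP18, Finset.mem_insert, Finset.mem_singleton] at hP
    rcases hP with rfl | rfl | rfl | rfl | rfl | rfl | rfl | rfl <;>
      simp only [Set.mem_insert_iff, Set.mem_singleton_iff, true_or, or_true] <;>
      norm_num [interior_P18, coeV, Matrix.cons_val_two, Matrix.tail_cons] at hx
  · rintro (rfl | rfl | rfl | rfl) <;>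
      norm_num [interior_P18, coeV, Matrix.cons_val_two, Matrix.tail_cons]

theorem isPrim_sub_of_mem_P18 {x y : Fin 3 → ℤ} (hx : coeV x ∈ P18) (hy : coeV y ∈ P18)
    (hxy : x ≠ y) : IsPrim (y - x) :=
  isPrim_sub_of_mem_latticePointsP18 x (mem_latticePointsP18 hx) y (mem_latticePointsP18 hy) hxy

theorem injOn_sub_offDiag_P18 :
    Set.InjOn (fun p => p.2 - p.1) {x : Fin 3 → ℤ | coeV x ∈ P18}.offDiag :=
  injOn_sub_offDiag_latticePointsP18.mono fun _ ⟨h₁, h₂, h⟩ =>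
    Finset.mem_offDiag.2 ⟨mem_latticePointsP18 h₁, mem_latticePointsP18 h₂, h⟩

theorem not_parallel_of_mem_P18 {x y z w : Fin 3 → ℤ} (hx : coeV x ∈ P18) (hy : coeV y ∈ P18)
    (hz : coeV z ∈ P18) (hw : coeV w ∈ P18) (hxy : x ≠ y) (hzw : z ≠ w)
    (hne : ({x, y} : Set (Fin 3 → ℤ)) ≠ {z, w}) :
    ¬ ∃ p q : ℤ, p ≠ 0 ∧ q ≠ 0 ∧ ∀ i, p * (y i - x i) = q * (w i - z i) := by
  rintro ⟨p, q, hp, -, h⟩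
  rcases (isPrim_sub_of_mem_P18 hx hy hxy).eq_or_eq_neg_of_mul_eq
    (isPrim_sub_of_mem_P18 hz hw hzw) hp h with h | h
  · obtain ⟨rfl, rfl⟩ := Prod.ext_iff.1
      (@injOn_sub_offDiag_P18 (x, y) ⟨hx, hy, hxy⟩ (z, w) ⟨hz, hw, hzw⟩ h)
    exact hne rfl
  · obtain ⟨rfl, rfl⟩ := Prod.ext_iff.1
      (@injOn_sub_offDiag_P18 (x, y) ⟨hx, hy, hxy⟩ (w, z) ⟨hw, hz, hzw.symm⟩ (by simpa using h))
    exact hne (Set.pair_comm _ _)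

theorem minkLen_P18 : MinkLen P18 1 :=
  ⟨isDecomp_one_of_isPrim_sub (convex_convexHull ℝ _) (x := ![0, 0, 0]) (y := ![1, 3, 0])
      (subset_convexHull ℝ _ (by simp)) (subset_convexHull ℝ _ (by simp))
      (by unfold IsPrim; decide),
    fun _ => IsDecomp.le_one_of_injOn_sub injOn_sub_offDiag_P18⟩

/-- `P18` has exactly the four interior lattice points `(1,2,1), (1,2,2), (1,1,1), (2,1,2)`;
no segment between lattice points of `P18` has lattice length ≥ 2, no two distinct such
segments are parallel, and `L(P18) = 1` while `P18` has 4 interior lattice points. -/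
theorem stmt18 :
    {x : Fin 3 → ℤ | coeV x ∈ interior P18} =
      {![1, 2, 1], ![1, 2, 2], ![1, 1, 1], ![2, 1, 2]} ∧
    (∀ x y : Fin 3 → ℤ, coeV x ∈ P18 → coeV y ∈ P18 → x ≠ y →
      Finset.univ.gcd (fun i => y i - x i) = 1) ∧
    (∀ x y z w : Fin 3 → ℤ, coeV x ∈ P18 → coeV y ∈ P18 → coeV z ∈ P18 → coeV w ∈ P18 →
      x ≠ y → z ≠ w → ({x, y} : Set (Fin 3 → ℤ)) ≠ {z, w} →
      ¬ ∃ p q : ℤ, p ≠ 0 ∧ q ≠ 0 ∧ ∀ i, p * (y i - x i) = q * (w i - z i)) ∧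
    MinkLen P18 1 :=
  ⟨interior_latticePoints_P18, fun _ _ => isPrim_sub_of_mem_P18,
    fun _ _ _ _ => not_parallel_of_mem_P18, minkLen_P18⟩
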